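/- The simple (unweighted) count checks out: for all n ≥ 1, sum over k from 1 to floor((n+1)/2) of T_{n,k} = S_n, where T_{n,k} = 2^{n-2k+1} * C(n-1, 2k-2) * S_{k-1}. -/
import Mathlib

open Finset

/-- The n-th Catalan number S_n = (1/(n+1)) * C(2n, n). -/
def S (n : ℕ) : ℕ := Nat.choose (2 * n) n / (n + 1)

/-- T_{n,k} = 2^{n-2k+1} * C(n-1, 2k-2) * S_{k-1}. -/
def T (n k : ℕ) : ℕ := 2 ^ (n + 1 - 2 * k) * Nat.choose (n - 1) (2 * k - 2) * S (k - 1)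

lemma S_eq (n : ℕ) : S n = catalan n := by
  rw [S, catalan_eq_centralBinom_div, Nat.centralBinom]

/-- Catalan recurrence over ℚ. -/
lemma cat_rec (k : ℕ) : ((k : ℚ) + 2) * catalan (k + 1) = 2 * (2 * k + 1) * catalan k := by
  have hq1 : ((k : ℚ) + 2) * catalan (k + 1) = Nat.centralBinom (k + 1) := by
    exact_mod_cast congrArg (Nat.cast : ℕ → ℚ) (succ_mul_catalan_eq_centralBinom (k + 1))
  have hq2 : ((k : ℚ) + 1) * Nat.centralBinom (k + 1) = 2 * (2 * k + 1) * Nat.centralBinom k := by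
    exact_mod_cast congrArg (Nat.cast : ℕ → ℚ) (Nat.succ_mul_centralBinom_succ k)
  have hq3 : ((k : ℚ) + 1) * catalan k = Nat.centralBinom k := by
    exact_mod_cast congrArg (Nat.cast : ℕ → ℚ) (succ_mul_catalan_eq_centralBinom k)
  have hk : ((k : ℚ) + 1) ≠ 0 := by positivity
  refine mul_left_cancel₀ hk ?_
  calc ((k : ℚ) + 1) * (((k : ℚ) + 2) * catalan (k + 1))
      = ((k : ℚ) + 1) * Nat.centralBinom (k + 1) := by rw [hq1]
    _ = 2 * (2 * k + 1) * Nat.centralBinom k := hq2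
    _ = ((k : ℚ) + 1) * (2 * (2 * k + 1) * catalan k) := by rw [← hq3]; ring

/-- Absorption identity over ℚ, valid for all m. -/
lemma choose_absorb (n m : ℕ) :
    ((n : ℚ) - m) * Nat.choose n m = (m + 1) * Nat.choose n (m + 1) := by
  rcases le_or_gt m n with h | h
  · have h0 := Nat.choose_succ_right_eq n m
    have hq : ((Nat.choose n (m + 1) * (m + 1) : ℕ) : ℚ) = ((Nat.choose n m * (n - m) : ℕ) : ℚ) :=
      congrArg (Nat.cast : ℕ → ℚ) h0
    push_cast [Nat.cast_sub h] at hq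
    linarith
  · rw [Nat.choose_eq_zero_of_lt h, Nat.choose_eq_zero_of_lt (by omega)]
    simp

noncomputable def fq (n k : ℕ) : ℚ :=
  Nat.choose n (2 * k) * catalan k * 2 ^ n * (1 / 4 : ℚ) ^ k

noncomputable def gq (n k : ℕ) : ℚ :=
  match k with
  | 0 => 0
  | k + 1 => -4 * ((k : ℚ) + 2) * Nat.choose n (2 * k + 1) * catalan (k + 1)
      * 2 ^ n * (1 / 4 : ℚ) ^ (k + 1)

lemma master (n k : ℕ) :
    ((n : ℚ) + 3) * fq (n + 1) k = 2 * (2 * n + 3) * fq n k + gq n (k + 1) - gq n k := by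
  cases k with
  | zero =>
      simp only [fq, gq, Nat.mul_zero, Nat.choose_zero_right, catalan_zero, pow_zero]
      norm_num [Nat.choose_one_right, catalan_one]
      push_cast
      ring
  | succ k =>
      simp only [fq, gq]
      have h1 := choose_absorb n (2 * k + 2)
      have h2 := choose_absorb n (2 * k + 1)
      have h3 : (Nat.choose (n + 1) (2 * k + 2) : ℚ)
          = Nat.choose n (2 * k + 1) + Nat.choose n (2 * k + 2) := by
        exact_mod_cast congrArg (Nat.cast : ℕ → ℚ) (Nat.choose_succ_succ n (2 * k + 1))
      have h4 := cat_rec (k + 1)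
      simp only [show 2 * (k + 1) = 2 * k + 2 from by ring, show 2 * (k + 1) + 1 = 2 * k + 3 from by ring,
        show k + 1 + 1 = k + 2 from by ring, show 2 * k + 2 + 1 = 2 * k + 3 from by ring,
        show 2 * k + 1 + 1 = 2 * k + 2 from by ring] at h1 h2 h3 h4 ⊢
      push_cast at h1 h2 h3 h4 ⊢
      linear_combination
        ((Nat.choose n (2 * k + 3) : ℚ) * 2 ^ n * (1 / 4 : ℚ) ^ (k + 1))
          * h4
        + (2 * ((n : ℚ) + 3) * (catalan (k + 1) : ℚ) * 2 ^ n * (1 / 4 : ℚ) ^ (k + 1)) * h3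
        - (2 * (catalan (k + 1) : ℚ) * 2 ^ n * (1 / 4 : ℚ) ^ (k + 1)) * h1
        + (2 * (catalan (k + 1) : ℚ) * 2 ^ n * (1 / 4 : ℚ) ^ (k + 1)) * h2

noncomputable def Aq (n : ℕ) : ℚ := ∑ k ∈ range (n + 2), fq n k

lemma fq_zero {n k : ℕ} (h : n < 2 * k) : fq n k = 0 := by
  simp [fq, Nat.choose_eq_zero_of_lt h]

lemma gq_zero_top (n : ℕ) : gq n (n + 2) = 0 := by
  simp [gq, Nat.choose_eq_zero_of_lt (show n < 2 * (n + 1) + 1 by omega)]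

lemma Aq_rec (n : ℕ) : ((n : ℚ) + 3) * Aq (n + 1) = 2 * (2 * n + 3) * Aq n := by
  have hA : Aq (n + 1) = ∑ k ∈ range (n + 2), fq (n + 1) k := by
    rw [Aq, sum_range_succ, fq_zero (by omega)]
    simp
  rw [hA, Aq, mul_sum, mul_sum]
  have step : ∀ k ∈ range (n + 2),
      ((n : ℚ) + 3) * fq (n + 1) k = 2 * (2 * n + 3) * fq n k + (gq n (k + 1) - gq n k) := by
    intro k _
    have := master n k
    linarith
  rw [sum_congr rfl step, sum_add_distrib, Finset.sum_range_sub (fun k => gq n k),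
    gq_zero_top]
  simp [gq]

lemma Aq_eq (n : ℕ) : Aq n = catalan (n + 1) := by
  induction n with
  | zero =>
      rw [Aq]
      norm_num [fq, Finset.sum_range_succ]
  | succ n ih =>
      have h1 := Aq_rec n
      have h2 := cat_rec (n + 1)
      rw [ih] at h1
      have hne : ((n : ℚ) + 3) ≠ 0 := by positivity
      refine mul_left_cancel₀ hne ?_
      rw [h1]
      push_cast at h2 ⊢
      linarith

theorem multiplicity_count_sum (n : ℕ) (hn : 1 ≤ n) :
    ∑ k ∈ Finset.Icc 1 ((n + 1) / 2), T n k = S n := by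
  obtain ⟨N, rfl⟩ : ∃ N, n = N + 1 := ⟨n - 1, by omega⟩
  rw [S_eq]
  have key : (((∑ k ∈ Finset.Icc 1 ((N + 1 + 1) / 2), T (N + 1) k : ℕ)) : ℚ)
      = catalan (N + 1) := by
    push_cast [Nat.cast_sum]
    set m := (N + 2) / 2 with hm
    have hIcc : Finset.Icc 1 m = Finset.Ico 1 (m + 1) := by
      rw [Finset.Ico_add_one_right_eq_Icc]
    rw [hIcc, Finset.sum_Ico_eq_sum_range]
    have hterm : ∀ j ∈ range (m + 1 - 1), (T (N + 1) (1 + j) : ℚ) = fq N j := by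
      intro j hj
      simp only [Finset.mem_range] at hj
      have h2j : 2 * j ≤ N := by omega
      have hT : T (N + 1) (1 + j) = 2 ^ (N - 2 * j) * Nat.choose N (2 * j) * catalan j := by
        rw [T, S_eq]
        congr 1
        · congr 2
          · omega
          · congr 1 <;> omega
        · congr 1; omega
      rw [hT, fq]
      have hpow : (2 : ℚ) ^ (N - 2 * j) * 4 ^ j = 2 ^ N := by
        rw [show (4 : ℚ) = 2 ^ 2 by norm_num, ← pow_mul, ← pow_add]
        congr 1
        omega
      have h2 : (2 : ℚ) ^ N * (1 / 4 : ℚ) ^ j = 2 ^ (N - 2 * j) := by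
        rw [← hpow, mul_assoc, ← mul_pow]
        norm_num
      push_cast
      rw [← h2]
      ring
    rw [Finset.sum_congr rfl hterm]
    have hsub : range (m + 1 - 1) ⊆ range (N + 2) := by
      apply Finset.range_subset_range.2
      omega
    rw [Finset.sum_subset hsub]
    · rw [← Aq, Aq_eq]
    · intro j _ hj
      simp only [Finset.mem_range] at hj
      apply fq_zero
      omega
  exact_mod_cast key
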